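/- Let A = A(Φ, Δ, Θ; a, m, Π, Γ) be a class of automata over the factored input alphabet X^a with internal alphabet Π and output alphabet Γ, where Δ is a finite class of semiautomata, and view A as a class of string functions on nonempty strings over X^a of length at most M. Then the growth of A satisfies G(A, ℓ) ≤ C(a, m) · |Δ| · G(Φ, ℓ·M) · G(Θ, ℓ), where C(a, m) is the binomial coefficient. -/

import Mathlib

/-
The value of an automaton on a string of length at most `M` is `θ` applied to a pair whose state
component only depends on the dependency set `J`, the semiautomaton, and the values of `φ` on the
projected letters of the string. Fixing `ℓ` strings, lay their projected letters (all but the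
last) out in an `ℓ × M` grid: the pattern of an automaton on the strings is then determined by
`J` (`C(a, m)` choices), the semiautomaton (`|Δ|` choices), the pattern of `φ` on the grid
(at most `G(Φ, ℓ·M)` choices) and the pattern of `θ` on the resulting `ℓ` inputs (at most
`G(Θ, ℓ)` choices).
-/

/-- A nonempty string over `σ`: first letter together with the remaining letters. -/
def NEStr (σ : Type*) : Type _ := σ × List σ

/-- The underlying list of letters of a nonempty string. -/
def NEStr.toList {σ : Type*} (x : NEStr σ) : List σ := x.1 :: x.2

/-- The last letter of a nonempty string. -/
def NEStr.lastLetter {σ : Type*} (x : NEStr σ) : σ := x.2.getLastD x.1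

/-- The growth of a class `F` of functions: `G(F, ℓ)` is the supremum, over all
sequences `x₁, …, x_ℓ` of domain elements, of the number of distinct patterns
`⟨f x₁, …, f x_ℓ⟩` for `f ∈ F`. -/
noncomputable def growth {α β : Type*} (F : Set (α → β)) (ℓ : ℕ) : ℕ∞ :=
  ⨆ xs : Fin ℓ → α, ((fun f => fun i => f (xs i)) '' F).encard

/-- A class of string functions viewed as a class of functions on nonempty
strings of length at most `M` (by restricting the domain). -/
def restrictLen {σ γ : Type*} (M : ℕ) (F : Set (NEStr σ → γ)) :
    Set ({w : NEStr σ // (NEStr.toList w).length ≤ M} → γ) :=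
  (fun f => fun w => f w.1) '' F

/-- A semiautomaton over the internal alphabet `Pi` with states `Q`. -/
structure Semiauto (Pi Q : Type*) where
  δ : Q → Pi → Q
  init : Q

/-- The function implemented by a semiautomaton. -/
def Semiauto.run {Pi Q : Type*} (D : Semiauto Pi Q) : List Pi → Q :=
  fun w => w.foldl D.δ D.init

/-- An automaton over the factored input alphabet `X^a`. -/
structure FAut (X : Type*) (a m : ℕ) (Pi Q Γ : Type*) where
  J : Finset (Fin a)
  hJ : J.card = m
  φ : (Fin m → X) → Pi
  sa : Semiauto Pi Q
  θ : Q × (Fin m → X) → Γ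

/-- The projection `π_J : X^a → X^m` onto the coordinates in `J` (in order). -/
def proj {X : Type*} {a m : ℕ} (J : Finset (Fin a)) (hJ : J.card = m)
    (σ : Fin a → X) : Fin m → X :=
  fun i => σ (J.orderIsoOfFin hJ i).val

/-- The string function implemented by an automaton over a factored alphabet:
`A(σ₁ … σₘ) = θ(δ(q_init, φ(π_J σ₁) ⋯ φ(π_J σₘ₋₁)), π_J σₘ)`. -/
def FAut.run {X : Type*} {a m : ℕ} {Pi Q Γ : Type*} (A : FAut X a m Pi Q Γ) :
    NEStr (Fin a → X) → Γ :=
  fun w =>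
    A.θ (A.sa.run ((NEStr.toList w).dropLast.map fun σ => A.φ (proj A.J A.hJ σ)),
         proj A.J A.hJ (NEStr.lastLetter w))

/-- The class `𝒜(Φ, Δ, Θ; a, m, Π, Γ)`. -/
def autClass {X : Type*} {a m : ℕ} {Pi Q Γ : Type*}
    (Φ : Set ((Fin m → X) → Pi)) (Δ : Set (Semiauto Pi Q))
    (Θ : Set (Q × (Fin m → X) → Γ)) : Set (FAut X a m Pi Q Γ) :=
  {A | A.φ ∈ Φ ∧ A.sa ∈ Δ ∧ A.θ ∈ Θ}

namespace Set

theorem encard_biUnion_le_encard_mul {ι α : Type*} (s : Set ι) (t : ι → Set α) {c : ℕ∞}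
    (h : ∀ i ∈ s, (t i).encard ≤ c) : (⋃ i ∈ s, t i).encard ≤ s.encard * c := by
  rcases s.finite_or_infinite with hs | hs
  · induction s, hs using Set.Finite.induction_on with
    | empty => simp
    | @insert i s hi _ ih =>
      rw [biUnion_insert, encard_insert_of_notMem hi, add_mul, one_mul, add_comm]
      exact (encard_union_le _ _).trans <|
        add_le_add (h i (mem_insert _ _)) (ih fun j hj => h j (mem_insert_of_mem _ hj))
  · rcases eq_or_ne c 0 with rfl | hc
    · simp only [nonpos_iff_eq_zero, encard_eq_zero] at h
      simp_all
    · simp [hs.encard_eq, ENat.top_mul hc]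

end Set

section Patterns

variable {ι α β : Type*}

/-- `(patterns F xs).encard` is the number of patterns `N(F, xs)`. -/
def patterns (F : Set (α → β)) (xs : ι → α) : Set (ι → β) :=
  (fun f i => f (xs i)) '' F

theorem growth_eq_iSup_encard_patterns (F : Set (α → β)) (ℓ : ℕ) :
    growth F ℓ = ⨆ xs : Fin ℓ → α, (patterns F xs).encard :=
  rfl

theorem encard_patterns_le_growth (F : Set (α → β)) {ℓ : ℕ} (xs : Fin ℓ → α) :
    (patterns F xs).encard ≤ growth F ℓ :=
  le_iSup (fun xs : Fin ℓ → α => (patterns F xs).encard) xs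

theorem encard_patterns_le_growth_of_equiv (F : Set (α → β)) {n : ℕ} (e : Fin n ≃ ι)
    (xs : ι → α) : (patterns F xs).encard ≤ growth F n := by
  have : patterns F xs = (fun p => p ∘ e.symm) '' patterns F (xs ∘ e) := by
    simp only [patterns, Set.image_image]
    congr! with f
    simp
  rw [this]
  exact (Set.encard_image_le _ _).trans (encard_patterns_le_growth F _)

theorem patterns_restrictLen {σ γ : Type*} (M : ℕ) (F : Set (NEStr σ → γ))
    (ws : ι → {w : NEStr σ // (NEStr.toList w).length ≤ M}) :
    patterns (restrictLen M F) ws = patterns F (Subtype.val ∘ ws) := by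
  simp only [patterns, restrictLen, Set.image_image, Function.comp_apply]

end Patterns

theorem List.map_eq_take_map_finRange_getD {α β : Type*} {l : List α} {M : ℕ}
    (hl : l.length ≤ M) (g : α → β) (d : α) :
    l.map g = ((List.finRange M).map fun j : Fin M => g (l.getD j d)).take l.length := by
  refine List.ext_getElem (by simpa using hl) fun k hk _ => ?_
  rw [List.length_map] at hk
  simp [List.getElem?_eq_getElem hk]

section Automata

variable {X ι : Type*} {a m : ℕ} {Pi Q Γ : Type*}

/-- Row `i` lists the projected letters of `ws i` but the last, padded to length `M`. -/
def prefixGrid (J : {J : Finset (Fin a) // J.card = m}) (M : ℕ) (ws : ι → NEStr (Fin a → X)) :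
    ι × Fin M → Fin m → X :=
  fun k => proj J.1 J.2 ((NEStr.toList (ws k.1)).dropLast.getD k.2 (ws k.1).1)

/-- The arguments of the output function, given the values `p` of the input function on
`prefixGrid J M ws`. -/
def outputArgs (J : {J : Finset (Fin a) // J.card = m}) (M : ℕ) (D : Semiauto Pi Q)
    (ws : ι → NEStr (Fin a → X)) (p : ι × Fin M → Pi) : ι → Q × (Fin m → X) :=
  fun i => (D.run (((List.finRange M).map fun j : Fin M => p (i, j)).take
      (NEStr.toList (ws i)).dropLast.length), proj J.1 J.2 (NEStr.lastLetter (ws i)))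

theorem FAut.run_eq_θ_outputArgs (A : FAut X a m Pi Q Γ) {M : ℕ} (ws : ι → NEStr (Fin a → X))
    (hws : ∀ i, (NEStr.toList (ws i)).length ≤ M) (i : ι) :
    A.run (ws i) = A.θ (outputArgs ⟨A.J, A.hJ⟩ M A.sa ws
      (fun k => A.φ (prefixGrid ⟨A.J, A.hJ⟩ M ws k)) i) := by
  have hlen : (NEStr.toList (ws i)).dropLast.length ≤ M :=
    (List.dropLast_sublist _).length_le.trans (hws i)
  simp only [FAut.run, outputArgs, prefixGrid]
  rw [List.map_eq_take_map_finRange_getD hlen _ (ws i).1]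

theorem patterns_autClass_subset (Φ : Set ((Fin m → X) → Pi)) (Δ : Set (Semiauto Pi Q))
    (Θ : Set (Q × (Fin m → X) → Γ)) {M : ℕ} (ws : ι → NEStr (Fin a → X))
    (hws : ∀ i, (NEStr.toList (ws i)).length ≤ M) :
    patterns ((fun A => FAut.run A) '' autClass (X := X) (a := a) Φ Δ Θ) ws ⊆
      ⋃ J ∈ (Set.univ : Set {J : Finset (Fin a) // J.card = m}), ⋃ D ∈ Δ,
        ⋃ p ∈ patterns Φ (prefixGrid J M ws), patterns Θ (outputArgs J M D ws p) := by
  rintro _ ⟨_, ⟨A, ⟨hφ, hD, hθ⟩, rfl⟩, rfl⟩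
  simp only [Set.mem_iUnion]
  exact ⟨⟨A.J, A.hJ⟩, Set.mem_univ _, A.sa, hD, _, ⟨A.φ, hφ, rfl⟩, A.θ, hθ,
    funext fun i => (A.run_eq_θ_outputArgs ws hws i).symm⟩

theorem encard_patterns_autClass_le (Φ : Set ((Fin m → X) → Pi)) (Δ : Set (Semiauto Pi Q))
    (Θ : Set (Q × (Fin m → X) → Γ)) (M ℓ : ℕ) (ws : Fin ℓ → NEStr (Fin a → X))
    (hws : ∀ i, (NEStr.toList (ws i)).length ≤ M) :
    (patterns ((fun A => FAut.run A) '' autClass (X := X) (a := a) Φ Δ Θ) ws).encard ≤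
      (Nat.choose a m : ℕ∞) * Δ.encard * growth Φ (ℓ * M) * growth Θ ℓ := by
  have hJ : (Set.univ : Set {J : Finset (Fin a) // J.card = m}).encard = Nat.choose a m := by
    simp [Set.encard_univ, ENat.card_eq_coe_fintype_card]
  calc _ ≤ _ := Set.encard_mono (patterns_autClass_subset Φ Δ Θ ws hws)
    _ ≤ Set.univ.encard * (Δ.encard * (growth Φ (ℓ * M) * growth Θ ℓ)) :=
      Set.encard_biUnion_le_encard_mul _ _ fun J _ =>
        Set.encard_biUnion_le_encard_mul _ _ fun D _ =>
          (Set.encard_biUnion_le_encard_mul _ _ fun p _ =>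
            encard_patterns_le_growth Θ _).trans <| mul_le_mul_left
              (encard_patterns_le_growth_of_equiv Φ finProdFinEquiv.symm _) _
    _ = _ := by rw [hJ, mul_assoc, mul_assoc]

end Automata

theorem growth_autClass_le_general {X : Type*} {a m : ℕ} {Pi Q Γ : Type*}
    (Φ : Set ((Fin m → X) → Pi)) (Δ : Set (Semiauto Pi Q))
    (Θ : Set (Q × (Fin m → X) → Γ)) (M ℓ : ℕ) :
    growth (restrictLen M ((fun A => FAut.run A) '' autClass (X := X) (a := a) Φ Δ Θ)) ℓ ≤
      (Nat.choose a m : ℕ∞) * Δ.encard * growth Φ (ℓ * M) * growth Θ ℓ := by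
  rw [growth_eq_iSup_encard_patterns]
  refine iSup_le fun ws => ?_
  rw [patterns_restrictLen]
  exact encard_patterns_autClass_le Φ Δ Θ M ℓ _ fun i => (ws i).2

/-- The growth of the class `𝒜(Φ, Δ, Θ; a, m, Π, Γ)`, viewed as a class of
string functions on nonempty strings of length at most `M`, is bounded as
`G(𝒜, ℓ) ≤ C(a, m) · |Δ| · G(Φ, ℓ·M) · G(Θ, ℓ)`. -/
theorem growth_autClass_le {X : Type*} {a m : ℕ} {Pi Q Γ : Type*}
    (Φ : Set ((Fin m → X) → Pi)) (Δ : Set (Semiauto Pi Q))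
    (Θ : Set (Q × (Fin m → X) → Γ)) (hΔ : Δ.Finite) (M ℓ : ℕ) :
    growth (restrictLen M ((fun A => FAut.run A) '' autClass (X := X) (a := a) Φ Δ Θ)) ℓ ≤
      (Nat.choose a m : ℕ∞) * Δ.encard * growth Φ (ℓ * M) * growth Θ ℓ :=
  growth_autClass_le_general Φ Δ Θ M ℓ
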